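/- Let p, q ∈ [0,1] with pq < 1 and let M be the 4×4 complex matrix M = (1/(2(1-pq)))·[[(1-p), 0, 0, (1-p)(1-2q)], [0, p(1-q), p(1-q), 0], [0, p(1-q), p(1-q), 0], [(1-p)(1-2q), 0, 0, (1-p)]] (rows/columns indexed by 00,01,10,11). Then the characteristic polynomial of M factors as χ_M(X) = X · (X − (1-p)(1-q)/(1-pq)) · (X − (1-p)q/(1-pq)) · (X − p(1-q)/(1-pq)); in particular the eigenvalues of M are (1-p)(1-q)/(1-pq), p(1-q)/(1-pq), (1-p)q/(1-pq), and 0. -/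

import Mathlib

/-!
In the basis order 00, 11, 01, 10 the matrix `M p q` is block diagonal with two circulant
blocks `[[a, b], [b, a]]` and `[[c, c], [c, c]]`, and a block `[[a, b], [b, a]]` has
eigenvalues `a ± b`. For `M p q` these are `(1-p)(1-q)/(1-pq)`, `(1-p)q/(1-pq)` on the first
block and `p(1-q)/(1-pq)`, `0` on the second.
-/

open Matrix Polynomial

noncomputable section

/-- The Choi matrix of the heralded quantum-switch channel, written explicitly in the
ordered basis 00, 01, 10, 11. -/
def M (p q : ℝ) : Matrix (Fin 4) (Fin 4) ℂ :=
  (1 / (2 * (1 - (p * q : ℝ))) : ℂ) •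
    !![((1 - p : ℝ) : ℂ), 0, 0, (((1 - p) * (1 - 2 * q) : ℝ) : ℂ);
       0, ((p * (1 - q) : ℝ) : ℂ), ((p * (1 - q) : ℝ) : ℂ), 0;
       0, ((p * (1 - q) : ℝ) : ℂ), ((p * (1 - q) : ℝ) : ℂ), 0;
       (((1 - p) * (1 - 2 * q) : ℝ) : ℂ), 0, 0, ((1 - p : ℝ) : ℂ)]

def crossMatrix {R : Type*} [Zero R] (a b c d : R) : Matrix (Fin 4) (Fin 4) R :=
  !![a, 0, 0, b; 0, c, d, 0; 0, d, c, 0; b, 0, 0, a]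

theorem charpoly_crossMatrix {R : Type*} [CommRing R] (a b c d : R) :
    (crossMatrix a b c d).charpoly =
      (X - C (a + b)) * (X - C (a - b)) * (X - C (c + d)) * (X - C (c - d)) := by
  simp only [charpoly, crossMatrix, det_succ_row_zero, Fin.sum_univ_succ, charmatrix_apply,
    map_add, map_sub]
  simp [Fin.succAbove]
  ring

theorem spectrum_eq_of_charpoly_eq_X_mul {K n : Type*} [Field K] [Fintype n] [DecidableEq n]
    {A : Matrix n n K} {a b c : K} (h : A.charpoly = X * (X - C a) * (X - C b) * (X - C c)) :
    spectrum K A = {a, b, c, 0} := by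
  ext z
  simp only [mem_spectrum_iff_isRoot_charpoly, h, IsRoot, eval_mul, eval_sub, eval_X, eval_C,
    mul_eq_zero, sub_eq_zero, Set.mem_insert_iff, Set.mem_singleton_iff]
  tauto

theorem choi_matrix_charpoly_and_eigenvalues_general (p q : ℝ) :
    (M p q).charpoly =
      X * (X - C (((1 - p) * (1 - q) / (1 - p * q) : ℝ) : ℂ)) *
        (X - C (((1 - p) * q / (1 - p * q) : ℝ) : ℂ)) *
        (X - C ((p * (1 - q) / (1 - p * q) : ℝ) : ℂ)) ∧
    spectrum ℂ (M p q) =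
      {(((1 - p) * (1 - q) / (1 - p * q) : ℝ) : ℂ),
       ((p * (1 - q) / (1 - p * q) : ℝ) : ℂ),
       (((1 - p) * q / (1 - p * q) : ℝ) : ℂ), 0} := by
  set ℓ₁ : ℂ := (((1 - p) * (1 - q) / (1 - p * q) : ℝ) : ℂ)
  set ℓ₂ : ℂ := (((1 - p) * q / (1 - p * q) : ℝ) : ℂ)
  set ℓ₃ : ℂ := ((p * (1 - q) / (1 - p * q) : ℝ) : ℂ)
  have hM : M p q = crossMatrix ((ℓ₁ + ℓ₂) / 2) ((ℓ₁ - ℓ₂) / 2) (ℓ₃ / 2) (ℓ₃ / 2) := by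
    ext i j
    fin_cases i <;> fin_cases j <;> simp [M, crossMatrix, ℓ₁, ℓ₂, ℓ₃] <;> ring
  have hcharpoly : (M p q).charpoly = X * (X - C ℓ₁) * (X - C ℓ₂) * (X - C ℓ₃) := by
    rw [hM, charpoly_crossMatrix, show (ℓ₁ + ℓ₂) / 2 + (ℓ₁ - ℓ₂) / 2 = ℓ₁ by ring,
      show (ℓ₁ + ℓ₂) / 2 - (ℓ₁ - ℓ₂) / 2 = ℓ₂ by ring, add_halves, sub_self, C_0, sub_zero]
    ring
  refine ⟨hcharpoly, ?_⟩
  rw [spectrum_eq_of_charpoly_eq_X_mul hcharpoly, Set.insert_comm ℓ₂]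

theorem choi_matrix_charpoly_and_eigenvalues (p q : ℝ) (hp : p ∈ Set.Icc (0:ℝ) 1)
    (hq : q ∈ Set.Icc (0:ℝ) 1) (hpq : p * q < 1) :
    (M p q).charpoly =
      X * (X - C (((1 - p) * (1 - q) / (1 - p * q) : ℝ) : ℂ)) *
        (X - C (((1 - p) * q / (1 - p * q) : ℝ) : ℂ)) *
        (X - C ((p * (1 - q) / (1 - p * q) : ℝ) : ℂ)) ∧
    spectrum ℂ (M p q) =
      {(((1 - p) * (1 - q) / (1 - p * q) : ℝ) : ℂ),
       ((p * (1 - q) / (1 - p * q) : ℝ) : ℂ),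
       (((1 - p) * q / (1 - p * q) : ℝ) : ℂ), 0} :=
  choi_matrix_charpoly_and_eigenvalues_general p q

end
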